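/- Suppose g : ℝ^p × ℝ^q → ℝ is such that for every x, the map y ↦ g(x,y) is μ_y-strongly convex and differentiable, and ∇_y g is L̃_{xy}-Lipschitz in x, i.e., ‖∇_y g(x₁,y) − ∇_y g(x₂,y)‖ ≤ L̃_{xy}‖x₁ − x₂‖ for all y. Let y*(x) denote the unique minimizer of g(x,·). Then y* is (L̃_{xy}/μ_y)-Lipschitz: ‖y*(x₁) − y*(x₂)‖ ≤ (L̃_{xy}/μ_y)‖x₁ − x₂‖ for all x₁, x₂. -/

import Mathlib

/-!
Adding the strong convexity inequality at `y` and at `y'` shows that `G = ∇_y g(x₁, ·)` is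
`μ_y`-strongly monotone, hence `μ_y ‖y₁ - y₂‖ ≤ ‖G y₁ - G y₂‖` for the minimizers `yᵢ = y*(xᵢ)`.
Both minimizers are critical points, so `G y₁ = 0 = ∇_y g(x₂, y₂)`, and the right-hand side is
`‖∇_y g(x₁, y₂) - ∇_y g(x₂, y₂)‖ ≤ L̃_{xy} ‖x₁ - x₂‖`.
-/

open InnerProductSpace

section

variable {F : Type*} [NormedAddCommGroup F] [InnerProductSpace ℝ F]

theorem IsLocalMin.hasGradientAt_eq_zero [CompleteSpace F] {f : F → ℝ} {g a : F}
    (h : IsLocalMin f a) (hf : HasGradientAt f g a) : g = 0 :=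
  (toDual ℝ F).map_eq_zero_iff.mp (h.hasFDerivAt_eq_zero hf)

theorem mul_norm_le_norm_of_mul_sq_norm_le_inner {μ : ℝ} {u v : F}
    (h : μ * ‖v‖ ^ 2 ≤ ⟪u, v⟫_ℝ) : μ * ‖v‖ ≤ ‖u‖ := by
  rcases (norm_nonneg v).eq_or_lt with hv | hv
  · rw [← hv, mul_zero]
    exact norm_nonneg u
  · refine le_of_mul_le_mul_right ?_ hv
    calc μ * ‖v‖ * ‖v‖ = μ * ‖v‖ ^ 2 := by ring
      _ ≤ ⟪u, v⟫_ℝ := h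
      _ ≤ ‖u‖ * ‖v‖ := real_inner_le_norm u v

theorem mul_sq_norm_sub_le_inner_of_strongConvex {f : F → ℝ} {G : F → F} {μ : ℝ}
    (hsc : ∀ y y', f y + ⟪G y, y' - y⟫_ℝ + μ / 2 * ‖y' - y‖ ^ 2 ≤ f y') (y y' : F) :
    μ * ‖y - y'‖ ^ 2 ≤ ⟪G y - G y', y - y'⟫_ℝ := by
  have h₁ := hsc y y'
  have h₂ := hsc y' y
  rw [← neg_sub y y', inner_neg_right, norm_neg] at h₁
  rw [inner_sub_left]
  linarith

theorem mul_norm_sub_le_norm_sub_of_strongConvex {f : F → ℝ} {G : F → F} {μ : ℝ}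
    (hsc : ∀ y y', f y + ⟪G y, y' - y⟫_ℝ + μ / 2 * ‖y' - y‖ ^ 2 ≤ f y') (y y' : F) :
    μ * ‖y - y'‖ ≤ ‖G y - G y'‖ :=
  mul_norm_le_norm_of_mul_sq_norm_le_inner (mul_sq_norm_sub_le_inner_of_strongConvex hsc y y')

end

theorem inner_minimizer_lipschitz_general {p q : ℕ} (μy Lxy : ℝ) (hμy : 0 < μy)
    (g : EuclideanSpace ℝ (Fin p) → EuclideanSpace ℝ (Fin q) → ℝ)
    (Gy : EuclideanSpace ℝ (Fin p) → EuclideanSpace ℝ (Fin q) → EuclideanSpace ℝ (Fin q))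
    (hgrad : ∀ x y, HasGradientAt (g x) (Gy x y) y)
    (hsc : ∀ x y y', g x y' ≥ g x y + (inner ℝ (Gy x y) (y' - y) : ℝ) + μy / 2 * ‖y' - y‖ ^ 2)
    (hlip : ∀ x₁ x₂ y, ‖Gy x₁ y - Gy x₂ y‖ ≤ Lxy * ‖x₁ - x₂‖)
    (ystar : EuclideanSpace ℝ (Fin p) → EuclideanSpace ℝ (Fin q))
    (hmin : ∀ x y, g x (ystar x) ≤ g x y) :
    ∀ x₁ x₂, ‖ystar x₁ - ystar x₂‖ ≤ (Lxy / μy) * ‖x₁ - x₂‖ := by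
  have hcrit : ∀ x, Gy x (ystar x) = 0 := fun x =>
    IsLocalMin.hasGradientAt_eq_zero (.of_forall (hmin x)) (hgrad x _)
  intro x₁ x₂
  rw [div_mul_eq_mul_div, le_div_iff₀' hμy]
  calc μy * ‖ystar x₁ - ystar x₂‖
      ≤ ‖Gy x₁ (ystar x₁) - Gy x₁ (ystar x₂)‖ :=
        mul_norm_sub_le_norm_sub_of_strongConvex (hsc x₁) _ _
    _ = ‖Gy x₁ (ystar x₂) - Gy x₂ (ystar x₂)‖ := by rw [hcrit, hcrit, zero_sub, norm_neg, sub_zero]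
    _ ≤ Lxy * ‖x₁ - x₂‖ := hlip _ _ _

/-- Lipschitz continuity of the inner-level minimizer `y*(x)` when `g(x,·)` is
`μ_y`-strongly convex and `∇_y g` is `L̃_{xy}`-Lipschitz in `x`. -/
theorem inner_minimizer_lipschitz {p q : ℕ} (μy Lxy : ℝ) (hμy : 0 < μy) (hLxy : 0 ≤ Lxy)
    (g : EuclideanSpace ℝ (Fin p) → EuclideanSpace ℝ (Fin q) → ℝ)
    (Gy : EuclideanSpace ℝ (Fin p) → EuclideanSpace ℝ (Fin q) → EuclideanSpace ℝ (Fin q))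
    (hgrad : ∀ x y, HasGradientAt (g x) (Gy x y) y)
    (hsc : ∀ x y y', g x y' ≥ g x y + (inner ℝ (Gy x y) (y' - y) : ℝ) + μy / 2 * ‖y' - y‖ ^ 2)
    (hlip : ∀ x₁ x₂ y, ‖Gy x₁ y - Gy x₂ y‖ ≤ Lxy * ‖x₁ - x₂‖)
    (ystar : EuclideanSpace ℝ (Fin p) → EuclideanSpace ℝ (Fin q))
    (hmin : ∀ x y, g x (ystar x) ≤ g x y) :
    ∀ x₁ x₂, ‖ystar x₁ - ystar x₂‖ ≤ (Lxy / μy) * ‖x₁ - x₂‖ :=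
  inner_minimizer_lipschitz_general μy Lxy hμy g Gy hgrad hsc hlip ystar hmin
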